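/- Let A be the set {(0,0)} ∪ {(⌊φn⌋+1, ⌊φ²n⌋+1) : n ≥ 0} ⊆ ℕ × ℕ (unordered pairs). Then no legal F-Wythoff move leads from a position in A to another position in A. -/

import Mathlib

/-! Sorted, a nonzero position of the set is `(⌊φn⌋ + 1, ⌊φn⌋ + n + 1)` because `φ² = φ + 1`, so its
index `n` is the difference of its coordinates. As `φ` is irrational and `1/φ + 1/φ² = 1`,
Rayleigh's theorem makes `⌊φm⌋` and `⌊φ²n⌋` (`m, n ≥ 1`) partition the positive integers, so no
positive integer is a coordinate of two different positions. Every move keeps one coordinate or,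
along the diagonal, the difference, hence never joins two positions of the set. -/

noncomputable def phi : ℝ := (1 + Real.sqrt 5) / 2

noncomputable def fl (n : ℕ) : ℕ := ⌊phi * n⌋₊

noncomputable def fl2 (n : ℕ) : ℕ := ⌊phi ^ 2 * n⌋₊

def FMove (p q : ℕ × ℕ) : Prop :=
  ∃ a b x y : ℕ, a ≤ b ∧ x ≤ y ∧ (p = (a, b) ∨ p = (b, a)) ∧ (q = (x, y) ∨ q = (y, x)) ∧
    ((x = a ∧ y < b) ∨ (x < a ∧ y = b) ∨ (x < a ∧ y = a) ∨
      (∃ k, 1 ≤ k ∧ k < a ∧ (b - k) / (a - k) = b / a ∧ x = a - k ∧ y = b - k))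

theorem fMove_lt {p q : ℕ × ℕ} (h : FMove p q) : q.1 + q.2 < p.1 + p.2 := by
  obtain ⟨a, b, x, y, hab, hxy, hp, hq, hc⟩ := h
  have hps : p.1 + p.2 = a + b := by rcases hp with h | h <;> subst h <;> simp <;> omega
  have hqs : q.1 + q.2 = x + y := by rcases hq with h | h <;> subst h <;> simp <;> omega
  rw [hps, hqs]
  rcases hc with ⟨h1, h2⟩ | ⟨h1, h2⟩ | ⟨h1, h2⟩ | ⟨k, hk1, hk2, _, h1, h2⟩ <;> omega

def PPos (p : ℕ × ℕ) : Prop := ∀ q, FMove p q → ¬ PPos q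
termination_by p.1 + p.2
decreasing_by exact fMove_lt (by assumption)

noncomputable def grundy (p : ℕ × ℕ) : ℕ :=
  sInf {g : ℕ | ∀ q, FMove p q → grundy q ≠ g}
termination_by p.1 + p.2
decreasing_by exact fMove_lt (by assumption)

open Real

lemma natCast_floor_mul_eq_beattySeq {r : ℝ} (hr : 0 ≤ r) (n : ℕ) :
    (⌊r * n⌋₊ : ℤ) = beattySeq r n := by
  rw [beattySeq, Int.natCast_floor_eq_floor (by positivity), mul_comm, Int.cast_natCast]

lemma Irrational.natFloor_mul_ne_natFloor_mul {r s : ℝ} (hrs : r.HolderConjugate s)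
    (hr : Irrational r) {m n : ℕ} (hm : m ≠ 0) (hn : n ≠ 0) : ⌊r * m⌋₊ ≠ ⌊s * n⌋₊ := by
  intro h
  have hmr : beattySeq r m = ⌊r * m⌋₊ := (natCast_floor_mul_eq_beattySeq hrs.nonneg m).symm
  have hns : beattySeq s n = ⌊r * m⌋₊ := by
    rw [h]; exact (natCast_floor_mul_eq_beattySeq hrs.symm.nonneg n).symm
  have hpos : (0 : ℤ) < ⌊r * m⌋₊ := by
    rw [← hmr, beattySeq, Int.floor_pos]
    exact one_le_mul_of_one_le_of_one_le (mod_cast Nat.one_le_iff_ne_zero.mpr hm) hrs.lt.le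
  have hpartition := Set.ext_iff.mp (hr.beattySeq_symmDiff_beattySeq_pos hrs) ⌊r * m⌋₊
  rcases Set.mem_symmDiff.mp (hpartition.mpr hpos) with ⟨-, hnot⟩ | ⟨-, hnot⟩
  · exact hnot ⟨n, by omega, hns⟩
  · exact hnot ⟨m, by omega, hmr⟩

lemma phi_eq_goldenRatio : phi = goldenRatio := by
  rw [phi]

lemma one_lt_phi : 1 < phi := phi_eq_goldenRatio ▸ one_lt_goldenRatio

lemma phi_pos : 0 < phi := zero_lt_one.trans one_lt_phi

lemma phi_sq : phi ^ 2 = phi + 1 := phi_eq_goldenRatio ▸ goldenRatio_sq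

lemma phi_holderConjugate_phi_sq : phi.HolderConjugate (phi ^ 2) := by
  rw [holderConjugate_iff_eq_conjExponent one_lt_phi, eq_div_iff (sub_pos.mpr one_lt_phi).ne']
  linear_combination phi * phi_sq

lemma fl_zero : fl 0 = 0 := by simp [fl]

lemma fl2_eq_fl_add (n : ℕ) : fl2 n = fl n + n := by
  have h : phi ^ 2 * n = phi * n + n := by rw [phi_sq]; ring
  rw [fl2, fl, h, Nat.floor_add_natCast (mul_nonneg phi_pos.le n.cast_nonneg)]

lemma fl_strictMono : StrictMono fl := by
  refine strictMono_nat_of_lt_succ fun n => ?_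
  calc fl n < ⌊phi * n⌋₊ + 1 := Nat.lt_succ_self _
    _ = ⌊phi * n + 1⌋₊ := (Nat.floor_add_one (mul_nonneg phi_pos.le n.cast_nonneg)).symm
    _ ≤ fl (n + 1) := Nat.floor_mono (by push_cast; linarith [one_lt_phi])

lemma fl2_strictMono : StrictMono fl2 := fun m n h => by
  have := fl_strictMono h
  rw [fl2_eq_fl_add, fl2_eq_fl_add]
  omega

lemma fl_ne_fl2 {m n : ℕ} (hm : m ≠ 0) (hn : n ≠ 0) : fl m ≠ fl2 n :=
  (phi_eq_goldenRatio ▸ goldenRatio_irrational).natFloor_mul_ne_natFloor_mul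
    phi_holderConjugate_phi_sq hm hn

lemma eq_zero_or_wythoffPair_of_mem {p : ℕ × ℕ}
    (hp : p = (0, 0) ∨ ∃ n : ℕ, p = (fl n + 1, fl2 n + 1) ∨ p = (fl2 n + 1, fl n + 1))
    {a b : ℕ} (hab : a ≤ b) (h : p = (a, b) ∨ p = (b, a)) :
    (a = 0 ∧ b = 0) ∨ ∃ n, a = fl n + 1 ∧ b = fl2 n + 1 := by
  rcases hp with rfl | ⟨n, rfl | rfl⟩ <;> simp only [Prod.mk.injEq] at h
  · omega
  all_goals
    have := fl2_eq_fl_add n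
    exact Or.inr ⟨n, by omega, by omega⟩

theorem stmt11 (p q : ℕ × ℕ)
    (hp : p ∈ {p : ℕ × ℕ | p = (0, 0) ∨ ∃ n : ℕ, p = (fl n + 1, fl2 n + 1) ∨ p = (fl2 n + 1, fl n + 1)})
    (hq : q ∈ {p : ℕ × ℕ | p = (0, 0) ∨ ∃ n : ℕ, p = (fl n + 1, fl2 n + 1) ∨ p = (fl2 n + 1, fl n + 1)}) :
    ¬ FMove p q := by
  rintro ⟨a, b, x, y, hab, hxy, hpab, hqxy, hmove⟩
  rcases eq_zero_or_wythoffPair_of_mem hp hab hpab with ⟨rfl, rfl⟩ | ⟨m, rfl, rfl⟩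
  · rcases hmove with h | h | h | ⟨k, -, hk, -⟩ <;> omega
  rcases eq_zero_or_wythoffPair_of_mem hq hxy hqxy with ⟨rfl, rfl⟩ | ⟨n, rfl, rfl⟩
  · rcases hmove with h | h | h | ⟨k, -, hk, -, hx, -⟩ <;> omega
  have hm := fl2_eq_fl_add m
  have hn := fl2_eq_fl_add n
  rcases hmove with ⟨hx, hy⟩ | ⟨hx, hy⟩ | ⟨hx, hy⟩ | ⟨k, hk, -, -, hx, hy⟩
  · obtain rfl := fl_strictMono.injective (by omega : fl n = fl m)
    omega
  · obtain rfl := fl2_strictMono.injective (by omega : fl2 n = fl2 m)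
    omega
  · have hmn : m = 0 ∨ n = 0 := by
      by_contra! h
      exact fl_ne_fl2 h.1 h.2 (by omega)
    have h0 := fl_zero
    rcases hmn with rfl | rfl <;> omega
  · obtain rfl : n = m := by omega
    omega
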